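/- The constraint X ≤_m Y is GAC if and only if for every i < n both of the following hold: (1) the multiset {min(DX 0), …, min(DX (i−1)), max(DX i), min(DX (i+1)), …, min(DX (n−1))} ≤_m ceiling(Y); and (2) floor(X) ≤_m the multiset {max(DY 0), …, max(DY (i−1)), min(DY i), max(DY (i+1)), …, max(DY (n−1))}. -/

import Mathlib

namespace MsetPaper

/-- The maximum element of a multiset of naturals (`0` for the empty multiset). -/
def mmax (s : Multiset ℕ) : ℕ := s.sup

/-- The strict multiset order `x <ₘ y` of the paper: either `x` is empty and `y` is not,
or both are nonempty and either `max x < max y`, or the maxima agree and the multisets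
with one occurrence of the maximum removed are again strictly ordered. -/
inductive MLt : Multiset ℕ → Multiset ℕ → Prop
  | empty {y : Multiset ℕ} : y ≠ 0 → MLt 0 y
  | maxLt {x y : Multiset ℕ} : x ≠ 0 → y ≠ 0 → mmax x < mmax y → MLt x y
  | maxEq {x y : Multiset ℕ} : x ≠ 0 → y ≠ 0 → mmax x = mmax y →
      MLt (x.erase (mmax x)) (y.erase (mmax y)) → MLt x y

/-- The (non-strict) multiset order `x ≤ₘ y`. -/
def MLe (x y : Multiset ℕ) : Prop := MLt x y ∨ x = y

/-- The multiset of values taken by a vector. -/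
def msetOf {n : ℕ} (x : Fin n → ℕ) : Multiset ℕ := (List.ofFn x : List ℕ)

/-- `(x, y)` is a satisfying assignment for the constraint `X ≤ₘ Y`. -/
def SatLe {n : ℕ} (DX DY : Fin n → Finset ℕ) (x y : Fin n → ℕ) : Prop :=
  (∀ i, x i ∈ DX i) ∧ (∀ i, y i ∈ DY i) ∧ MLe (msetOf x) (msetOf y)

/-- The value `v` is consistent for the variable `X i`. -/
def ConsX {n : ℕ} (DX DY : Fin n → Finset ℕ) (i : Fin n) (v : ℕ) : Prop :=
  ∃ x y, SatLe DX DY x y ∧ x i = v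

/-- The value `v` is consistent for the variable `Y i`. -/
def ConsY {n : ℕ} (DX DY : Fin n → Finset ℕ) (i : Fin n) (v : ℕ) : Prop :=
  ∃ x y, SatLe DX DY x y ∧ y i = v

/-- The constraint `X ≤ₘ Y` is generalised arc-consistent. -/
def GACLe {n : ℕ} (DX DY : Fin n → Finset ℕ) : Prop :=
  (∀ i, ∀ v ∈ DX i, ConsX DX DY i v) ∧ (∀ i, ∀ v ∈ DY i, ConsY DX DY i v)

/-! Lowering entries of the left vector or raising entries of the right one preserves `≤ₘ`:
raising a single element preserves it, and `≤ₘ` is compatible with adding a common element.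
So a value `v` of `X i` is consistent iff it is supported by the assignment that puts every
other `X j` at its minimum and every `Y j` at its maximum, and among the values of `DX i` the
maximum is the hardest to support; dually for `Y`. -/

open Multiset Function

section MultisetOrder

variable {s t : Multiset ℕ} {a b : ℕ}

@[simp]
lemma mmax_zero : mmax 0 = 0 := rfl

@[simp]
lemma mmax_singleton (a : ℕ) : mmax {a} = a := sup_singleton

lemma mmax_cons (a : ℕ) (s : Multiset ℕ) : mmax (a ::ₘ s) = max a (mmax s) :=
  sup_cons a s

lemma mmax_cons_of_le (h : mmax s ≤ a) : mmax (a ::ₘ s) = a := by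
  rw [mmax_cons, max_eq_left h]

lemma mmax_cons_of_ge (h : a ≤ mmax s) : mmax (a ::ₘ s) = mmax s := by
  rw [mmax_cons, max_eq_right h]

lemma mmax_mem (hs : s ≠ 0) : mmax s ∈ s := by
  induction s using Multiset.induction with
  | empty => exact absurd rfl hs
  | cons a t ih =>
    rcases eq_or_ne t 0 with rfl | ht
    · simp
    rcases le_total (mmax t) a with h | h
    · rw [mmax_cons_of_le h]
      exact mem_cons_self a t
    · rw [mmax_cons_of_ge h]
      exact mem_cons_of_mem (ih ht)

lemma erase_mmax_cons_of_lt (h : a < mmax s) :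
    (a ::ₘ s).erase (mmax (a ::ₘ s)) = a ::ₘ s.erase (mmax s) := by
  rw [mmax_cons_of_ge h.le, erase_cons_tail s h.ne]

lemma MLt.ne_zero_right (h : MLt s t) : t ≠ 0 := by
  cases h <;> assumption

lemma MLt.trans {u : Multiset ℕ} (hst : MLt s t) (htu : MLt t u) : MLt s u := by
  induction hst generalizing u with
  | empty => exact .empty htu.ne_zero_right
  | maxLt hs ht hlt =>
    cases htu with
    | empty => exact absurd rfl ht
    | maxLt _ hu hlt' => exact .maxLt hs hu (hlt.trans hlt')
    | maxEq _ hu heq _ => exact .maxLt hs hu (heq ▸ hlt)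
  | maxEq hs ht heq _ ih =>
    cases htu with
    | empty => exact absurd rfl ht
    | maxLt _ hu hlt => exact .maxLt hs hu (heq ▸ hlt)
    | maxEq _ hu heq' hrec => exact .maxEq hs hu (heq.trans heq') (ih hrec)

lemma MLt.cons_of_mmax_le (h : MLt s t) (hs : mmax s ≤ a) (ht : mmax t ≤ a) :
    MLt (a ::ₘ s) (a ::ₘ t) := by
  refine .maxEq cons_ne_zero cons_ne_zero (by rw [mmax_cons_of_le hs, mmax_cons_of_le ht]) ?_
  rwa [mmax_cons_of_le hs, mmax_cons_of_le ht, erase_cons_head, erase_cons_head]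

lemma MLt.cons (h : MLt s t) (a : ℕ) : MLt (a ::ₘ s) (a ::ₘ t) := by
  induction h with
  | @empty t ht =>
    rcases lt_or_ge a (mmax t) with hlt | hle
    · exact .maxLt cons_ne_zero cons_ne_zero (by simp [mmax_cons, hlt])
    · exact (MLt.empty ht).cons_of_mmax_le (by simp) hle
  | @maxLt s t hs ht hlt =>
    rcases lt_or_ge a (mmax t) with hlt' | hle
    · exact .maxLt cons_ne_zero cons_ne_zero (by simp [mmax_cons, hlt, hlt'])
    · exact (MLt.maxLt hs ht hlt).cons_of_mmax_le (by omega) hle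
  | @maxEq s t hs ht heq hrec ih =>
    rcases lt_or_ge a (mmax s) with hlt | hle
    · refine .maxEq cons_ne_zero cons_ne_zero (by rw [mmax_cons, mmax_cons, heq]) ?_
      rwa [erase_mmax_cons_of_lt hlt, erase_mmax_cons_of_lt (heq ▸ hlt)]
    · exact (MLt.maxEq hs ht heq hrec).cons_of_mmax_le hle (heq ▸ hle)

lemma mlt_cons_of_lt (s : Multiset ℕ) (hab : a < b) : MLt (a ::ₘ s) (b ::ₘ s) := by
  induction s using Multiset.strongInductionOn generalizing a b with
  | _ s ih =>
  rcases lt_or_ge (mmax s) b with hsb | hbs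
  · exact .maxLt cons_ne_zero cons_ne_zero (by simp [mmax_cons, hab, hsb])
  have hs : s ≠ 0 := by rintro rfl; simp at hbs; omega
  have has : a < mmax s := hab.trans_le hbs
  refine .maxEq cons_ne_zero cons_ne_zero
    (by rw [mmax_cons_of_ge has.le, mmax_cons_of_ge hbs]) ?_
  have hlt : s.erase (mmax s) < s := erase_lt.mpr (mmax_mem hs)
  rw [erase_mmax_cons_of_lt has]
  rcases hbs.eq_or_lt with rfl | hbs
  · rw [mmax_cons_of_le le_rfl, erase_cons_head]
    conv_rhs => rw [← cons_erase (mmax_mem hs)]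
    exact ih _ hlt hab
  · rw [erase_mmax_cons_of_lt hbs]
    exact ih _ hlt hab

lemma MLe.trans {u : Multiset ℕ} (hst : MLe s t) (htu : MLe t u) : MLe s u := by
  rcases hst with hst | rfl
  · rcases htu with htu | rfl
    · exact .inl (hst.trans htu)
    · exact .inl hst
  · exact htu

lemma MLe.cons (h : MLe s t) (a : ℕ) : MLe (a ::ₘ s) (a ::ₘ t) :=
  h.imp (MLt.cons · a) (congrArg _)

lemma mle_cons_of_le (s : Multiset ℕ) (hab : a ≤ b) : MLe (a ::ₘ s) (b ::ₘ s) := by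
  rcases hab.eq_or_lt with rfl | hab
  · exact .inr rfl
  · exact .inl (mlt_cons_of_lt s hab)

lemma MLe.of_rel (h : Rel (· ≤ ·) s t) : MLe s t := by
  induction h with
  | zero => exact .inr rfl
  | @cons a b s t hab _ ih => exact (ih.cons a).trans (mle_cons_of_le t hab)

lemma rel_msetOf {n : ℕ} {x y : Fin n → ℕ} (h : x ≤ y) :
    Rel (· ≤ ·) (msetOf x) (msetOf y) := by
  rw [msetOf, msetOf, ← Fin.univ_val_map, ← Fin.univ_val_map, rel_map]
  exact rel_refl_of_refl_on fun i _ => h i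

lemma MLe.msetOf_mono {n : ℕ} {x x' y y' : Fin n → ℕ} (h : MLe (msetOf x) (msetOf y))
    (hx : x' ≤ x) (hy : y ≤ y') : MLe (msetOf x') (msetOf y') :=
  (MLe.of_rel (rel_msetOf hx)).trans (h.trans (.of_rel (rel_msetOf hy)))

end MultisetOrder

section Consistency

variable {n : ℕ} {DX DY : Fin n → Finset ℕ} (hDX : ∀ i, (DX i).Nonempty)
  (hDY : ∀ i, (DY i).Nonempty) {i : Fin n} {v : ℕ}

def floorVec (D : Fin n → Finset ℕ) (hD : ∀ i, (D i).Nonempty) : Fin n → ℕ :=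
  fun j => (D j).min' (hD j)

def ceilVec (D : Fin n → Finset ℕ) (hD : ∀ i, (D i).Nonempty) : Fin n → ℕ :=
  fun j => (D j).max' (hD j)

lemma consX_iff (hv : v ∈ DX i) :
    ConsX DX DY i v ↔ MLe (msetOf (update (floorVec DX hDX) i v)) (msetOf (ceilVec DY hDY)) := by
  constructor
  · rintro ⟨x, y, ⟨hx, hy, hxy⟩, rfl⟩
    exact hxy.msetOf_mono (update_le_iff.2 ⟨le_rfl, fun j _ => (DX j).min'_le _ (hx j)⟩)
      fun j => (DY j).le_max' _ (hy j)
  · intro h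
    exact ⟨_, _, ⟨(forall_update_iff _ fun j w => w ∈ DX j).2 ⟨hv, fun j _ => (DX j).min'_mem _⟩,
      fun j => (DY j).max'_mem _, h⟩, update_self ..⟩

lemma consY_iff (hv : v ∈ DY i) :
    ConsY DX DY i v ↔ MLe (msetOf (floorVec DX hDX)) (msetOf (update (ceilVec DY hDY) i v)) := by
  constructor
  · rintro ⟨x, y, ⟨hx, hy, hxy⟩, rfl⟩
    exact hxy.msetOf_mono (fun j => (DX j).min'_le _ (hx j))
      (le_update_iff.2 ⟨le_rfl, fun j _ => (DY j).le_max' _ (hy j)⟩)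
  · intro h
    exact ⟨_, _, ⟨fun j => (DX j).min'_mem _,
      (forall_update_iff _ fun j w => w ∈ DY j).2 ⟨hv, fun j _ => (DY j).max'_mem _⟩, h⟩,
      update_self ..⟩

end Consistency

theorem stmt2_general (n : ℕ) (DX DY : Fin n → Finset ℕ)
    (hDX : ∀ i, (DX i).Nonempty) (hDY : ∀ i, (DY i).Nonempty) :
    GACLe DX DY ↔
      ∀ i : Fin n,
        MLe (msetOf (Function.update (fun j => (DX j).min' (hDX j)) i ((DX i).max' (hDX i))))
            (msetOf fun j => (DY j).max' (hDY j)) ∧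
        MLe (msetOf fun j => (DX j).min' (hDX j))
            (msetOf (Function.update (fun j => (DY j).max' (hDY j)) i ((DY i).min' (hDY i)))) := by
  constructor
  · rintro ⟨hX, hY⟩ i
    have hmax := (DX i).max'_mem (hDX i)
    have hmin := (DY i).min'_mem (hDY i)
    exact ⟨(consX_iff hDX hDY hmax).1 (hX i _ hmax), (consY_iff hDX hDY hmin).1 (hY i _ hmin)⟩
  · intro h
    refine ⟨fun i v hv => (consX_iff hDX hDY hv).2 ?_, fun i v hv => (consY_iff hDX hDY hv).2 ?_⟩
    · exact (h i).1.msetOf_mono (update_le_update_iff'.2 ((DX i).le_max' _ hv)) le_rfl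
    · exact (h i).2.msetOf_mono le_rfl (update_le_update_iff'.2 ((DY i).min'_le _ hv))

/-- Theorem 3 of the paper: `X ≤ₘ Y` is GAC iff for all `i`,
`floor(X)` with `X i` set to its maximum is `≤ₘ ceiling(Y)`, and
`floor(X) ≤ₘ ceiling(Y)` with `Y i` set to its minimum. -/
theorem stmt2 (n : ℕ) (hn : 1 ≤ n) (DX DY : Fin n → Finset ℕ)
    (hDX : ∀ i, (DX i).Nonempty) (hDY : ∀ i, (DY i).Nonempty) :
    GACLe DX DY ↔
      ∀ i : Fin n,
        MLe (msetOf (Function.update (fun j => (DX j).min' (hDX j)) i ((DX i).max' (hDX i))))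
            (msetOf fun j => (DY j).max' (hDY j)) ∧
        MLe (msetOf fun j => (DX j).min' (hDX j))
            (msetOf (Function.update (fun j => (DY j).max' (hDY j)) i ((DY i).min' (hDY i)))) :=
  stmt2_general n DX DY hDX hDY

end MsetPaper
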